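/- Let Σ be a planar model satisfying Assumption (*) and suppose α := dim(Σ) ≥ 1. Then for ℙ-almost every ω ∈ Ω the following holds: for every ε > 0 there exists m₀(ω,ε) such that for all m > m₀(ω,ε), inf_{W ∈ ℝP¹} H_m(π_W η^(ω)) ≥ α − 1 − ε. -/

import Mathlib

open MeasureTheory Filter Set
open scoped ENNReal Topology Classical

noncomputable section

namespace SSmodel

/-- The left shift on sequence space. -/
def shiftMap {I : Type} (ω : ℕ → I) : ℕ → I := fun n => ω (n + 1)

/-- The `j`-th iterate of the left shift. -/
def shiftN {I : Type} (j : ℕ) (ω : ℕ → I) : ℕ → I := fun n => ω (n + j)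

/-- A planar model: a finite family of homogeneous self-similar IFSs on ℂ together with
probability vectors and a selection measure on the symbolic space. -/
structure PlanarModel (I : Type) [Fintype I] [MeasurableSpace I] where
  k : I → ℕ
  k_pos : ∀ i, 0 < k i
  lam : I → ℂ
  lam_ne : ∀ i, lam i ≠ 0
  lam_lt : ∀ i, ‖lam i‖ < 1
  tr : (i : I) → Fin (k i) → ℂ
  p : (i : I) → Fin (k i) → ℝ
  p_pos : ∀ i j, 0 < p i j
  p_sum : ∀ i, ∑ j, p i j = 1
  P : Measure (ℕ → I)
  P_prob : IsProbabilityMeasure P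

namespace PlanarModel

variable {I : Type} [Fintype I] [MeasurableSpace I] (M : PlanarModel I)

/-- The coding map Π_ω. -/
def codingMap (ω : ℕ → I) (u : (n : ℕ) → Fin (M.k (ω n))) : ℂ :=
  ∑' n : ℕ, (∏ j ∈ Finset.range n, M.lam (ω j)) * M.tr (ω n) (u n)

/-- Characterization of the infinite product measure ⊗ₙ p_{ωₙ} via cylinders. -/
def IsProductMeasure (ω : ℕ → I) (μ : Measure ((n : ℕ) → Fin (M.k (ω n)))) : Prop :=
  IsProbabilityMeasure μ ∧
    ∀ (n : ℕ) (u : (j : Fin n) → Fin (M.k (ω j.val))),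
      μ {x | ∀ j : Fin n, x j.val = u j} = ∏ j : Fin n, ENNReal.ofReal (M.p (ω j.val) (u j))

/-- `η` is the family of random measures η^(ω) generated by the model:
η^(ω) is the pushforward under Π_ω of the product measure ⊗ₙ p_{ωₙ}. -/
def IsCodingFamily (η : (ℕ → I) → Measure ℂ) : Prop :=
  ∀ ω : ℕ → I, ∃ μ : Measure ((n : ℕ) → Fin (M.k (ω n))),
    M.IsProductMeasure ω μ ∧ η ω = μ.map (M.codingMap ω)

/-- Assumption (*) : the selection measure is shift-invariant and ergodic, some IFS occurring
with positive probability has two distinct maps, and some rotation occurring with positive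
probability is not real. -/
def AssumptionStar : Prop :=
  Ergodic shiftMap M.P ∧
    (∃ i₀ : I, M.P {ω | ω 0 = i₀} ≠ 0 ∧ ∃ j j' : Fin (M.k i₀), M.tr i₀ j ≠ M.tr i₀ j') ∧
    (∃ i₁ : I, M.P {ω | ω 0 = i₁} ≠ 0 ∧ (M.lam i₁).im ≠ 0)

/-- Non-degeneracy of the model. -/
def NonDegenerate : Prop :=
  ∃ i₀ : I, M.P {ω | ω 0 = i₀} ≠ 0 ∧ ∃ j j' : Fin (M.k i₀), M.tr i₀ j ≠ M.tr i₀ j'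

/-- The similarity dimension of the model (entropy over Lyapunov exponent). -/
def sdim : ℝ :=
  (∫ ω, (-∑ j, M.p (ω 0) j * Real.log (M.p (ω 0) j)) ∂M.P) /
    (-∫ ω, Real.log (‖M.lam (ω 0)‖) ∂M.P)

/-- f_u^(ω)(0), for a word u of length n. -/
def finCode (ω : ℕ → I) (n : ℕ) (u : (j : Fin n) → Fin (M.k (ω j.val))) : ℂ :=
  ∑ m : Fin n, (∏ j ∈ Finset.range m.val, M.lam (ω j)) * M.tr (ω m.val) (u m)

/-- The product of the contraction parts along the first n symbols. -/
def lamProd (ω : ℕ → I) (n : ℕ) : ℂ := ∏ j ∈ Finset.range n, M.lam (ω j)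

/-- The minimal distance Δ_n^(ω) between distinct cylinder points. -/
def Delta (ω : ℕ → I) (n : ℕ) : ℝ :=
  if ∃ u v : (j : Fin n) → Fin (M.k (ω j.val)), u ≠ v then
    sInf {d : ℝ | ∃ u v : (j : Fin n) → Fin (M.k (ω j.val)), u ≠ v ∧
      d = ‖M.finCode ω n u - M.finCode ω n v‖}
  else 0

/-- `R` is a good radius for the model: the closed ball B(0,R) is mapped into itself by all the
maps and 2·R·r_min > 1/2. -/
def GoodRadius (R : ℝ) : Prop :=
  0 < R ∧ (∀ (i : I) (j : Fin (M.k i)) (z : ℂ), ‖z‖ ≤ R →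
      ‖M.lam i * z + M.tr i j‖ < R) ∧
    ∀ i : I, (1 : ℝ) / 2 < 2 * R * ‖M.lam i‖

/-- `np ω n` is the integer n'(ω) adapted to scale 2^{-n}: it satisfies
2R·∏_{i<n'} r_{ω_i} ≤ 2^{-n} ≤ 2R·∏_{i<n'-1} r_{ω_i}. -/
def IsNPrime (R : ℝ) (np : (ℕ → I) → ℕ → ℕ) : Prop :=
  ∀ (ω : ℕ → I) (n : ℕ),
    2 * R * (∏ i ∈ Finset.range (np ω n), ‖M.lam (ω i)‖) ≤ (2 : ℝ) ^ (-(n : ℤ)) ∧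
      (2 : ℝ) ^ (-(n : ℤ)) ≤ 2 * R * ∏ i ∈ Finset.range (np ω n - 1), ‖M.lam (ω i)‖

/-- The point of the circle (in the squared identification ℝP¹ ≅ 𝕋) corresponding to the
rotation part φ_i of the i-th IFS: φ_i². -/
def rotPt (i : I) : ℂ := (M.lam i / (‖M.lam i‖ : ℂ)) ^ 2

/-- Generators of the rotation group G_Σ (squared identification), together with inverses. -/
def rotGens : Set ℂ := {z | ∃ i : I, z = M.rotPt i ∨ z = (starRingEnd ℂ) (M.rotPt i)}

/-- The closed orbit G_Σ·v of a point v of the circle. -/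
def orbitClosure (v : ℂ) : Set ℂ :=
  closure ((fun g => g * v) '' ((Submonoid.closure M.rotGens : Submonoid ℂ) : Set ℂ))

/-- Characterization of ξ^(W) (for the line W corresponding to the circle point v in the
squared identification): the unique probability measure on the coset G_Σ·v invariant under
all the rotations of the model. -/
def IsXiW (v : ℂ) (ξ : Measure ℂ) : Prop :=
  IsProbabilityMeasure ξ ∧ (∀ i : I, ξ.map (fun z => M.rotPt i * z) = ξ) ∧
    ξ (M.orbitClosure v) = 1

/-- The discrete measure ν^{(ω,n)} = ∑_u p_u δ_{f_u^(ω)(0)}. -/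
def nuMeasure (ω : ℕ → I) (n : ℕ) : Measure ℂ :=
  ∑ u : (j : Fin n) → Fin (M.k (ω j.val)),
    ENNReal.ofReal (∏ j : Fin n, M.p (ω j.val) (u j)) • Measure.dirac (M.finCode ω n u)

end PlanarModel

/-! ### Entropy, components, projections -/

/-- -x·log₂ x. -/
def plog (x : ℝ) : ℝ := -(x * Real.logb 2 x)

/-- Level-n dyadic cell of ℝ² ≅ ℂ with index a ∈ ℤ². -/
def cell2 (n : ℕ) (a : ℤ × ℤ) : Set ℂ :=
  {z : ℂ | (a.1 : ℝ) ≤ (2 : ℝ) ^ n * z.re ∧ (2 : ℝ) ^ n * z.re < (a.1 : ℝ) + 1 ∧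
    (a.2 : ℝ) ≤ (2 : ℝ) ^ n * z.im ∧ (2 : ℝ) ^ n * z.im < (a.2 : ℝ) + 1}

/-- Entropy (base 2) of a measure on ℂ w.r.t. the level-n dyadic partition. -/
def H2 (μ : Measure ℂ) (n : ℕ) : ℝ := ∑' a : ℤ × ℤ, plog (μ (cell2 n a)).toReal

/-- Normalized entropy H_n(μ) = H(μ,D_n)/n for measures on ℂ. -/
def Hn2 (μ : Measure ℂ) (n : ℕ) : ℝ := H2 μ n / n

/-- Level-n dyadic cell of ℝ with index a ∈ ℤ. -/
def cell1 (n : ℕ) (a : ℤ) : Set ℝ :=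
  {x : ℝ | (a : ℝ) ≤ (2 : ℝ) ^ n * x ∧ (2 : ℝ) ^ n * x < (a : ℝ) + 1}

/-- Entropy (base 2) of a measure on ℝ w.r.t. the level-n dyadic partition. -/
def H1 (μ : Measure ℝ) (n : ℕ) : ℝ := ∑' a : ℤ, plog (μ (cell1 n a)).toReal

/-- Normalized entropy for measures on ℝ. -/
def Hn1 (μ : Measure ℝ) (n : ℕ) : ℝ := H1 μ n / n

/-- Orthogonal projection of the plane onto the line with unit direction w,
composed with the isometry to ℝ: z ↦ ⟨z,w⟩. -/
def projMap (w : ℂ) (z : ℂ) : ℝ := z.re * w.re + z.im * w.im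

/-- Normalized entropy of the projection π_W μ, W the line with unit direction w. -/
def projHn (w : ℂ) (μ : Measure ℂ) (m : ℕ) : ℝ := Hn1 (μ.map (projMap w)) m

/-- Unit vectors of the plane. -/
abbrev UnitVec : Type := {w : ℂ // ‖w‖ = 1}

/-- A fixed choice of direction (unit vector) of the line corresponding to the circle
point v in the squared identification ℝP¹ ≅ 𝕋: a square root of v. -/
def lineDir (v : ℂ) : ℂ := Complex.exp (Complex.log v / 2)

/-- Index of the level-n dyadic cell containing x. -/
def cellIdx (n : ℕ) (x : ℂ) : ℤ × ℤ := (⌊(2 : ℝ) ^ n * x.re⌋, ⌊(2 : ℝ) ^ n * x.im⌋)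

/-- The level-n dyadic cell D_n(x) containing x. -/
def dyadicCellOf (n : ℕ) (x : ℂ) : Set ℂ := cell2 n (cellIdx n x)

/-- The homothety T_D mapping D_n(x) onto the unit square. -/
def rescaleMap (n : ℕ) (x : ℂ) (z : ℂ) : ℂ :=
  (2 : ℂ) ^ n * z - (((cellIdx n x).1 : ℂ) + ((cellIdx n x).2 : ℂ) * Complex.I)

/-- Raw component μ_{x,n}: normalized restriction of μ to D_n(x). -/
def rawComponent (μ : Measure ℂ) (n : ℕ) (x : ℂ) : Measure ℂ :=
  (μ (dyadicCellOf n x))⁻¹ • μ.restrict (dyadicCellOf n x)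

/-- Rescaled component μ^{x,n} = T_{D_n(x)}(μ_{x,n}). -/
def rescaledComponent (μ : Measure ℂ) (n : ℕ) (x : ℂ) : Measure ℂ :=
  (rawComponent μ n x).map (rescaleMap n x)

/-- μ is exact dimensional with dimension α. -/
def ExactDim (μ : Measure ℂ) (α : ℝ) : Prop :=
  ∀ᵐ x ∂μ, Tendsto (fun r : ℝ => Real.log (μ (Metric.closedBall x r)).toReal / Real.log r)
    (𝓝[>] (0 : ℝ)) (𝓝 α)

/-- The saturation dimension satdim(μ, ε, m, k): the maximal dimension of a subspace V ≤ ℝ²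
such that the proportion (w.r.t. μ) of level-k rescaled components that are (V,ε,m)-saturated
is at least 1-ε. (A measure ν is (V,ε,m)-saturated if H_m(ν) ≥ H_m(π_{V⊥}ν) + dim V − ε;
the subspaces of ℝ² ≅ ℂ are 0, the lines span(w), and ℝ² itself, and for V = span(w) the
orthogonal complement is the line with unit direction i·w.) -/
def satdim (μ : Measure ℂ) (ε : ℝ) (m k : ℕ) : ℕ :=
  if (1 - ε : ℝ) ≤ (μ {x | 2 - ε ≤ Hn2 (rescaledComponent μ k x) m}).toReal then 2
  else if ∃ w : ℂ, ‖w‖ = 1 ∧ (1 - ε : ℝ) ≤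
      (μ {x | projHn (Complex.I * w) (rescaledComponent μ k x) m + 1 - ε ≤
        Hn2 (rescaledComponent μ k x) m}).toReal then 1
  else 0

/-- μ is (C,ρ)-Frostman on tubes: μ(B(W+x,r)) ≤ C·r^ρ for every line W+x and r>0. -/
def FrostmanOnTubes (μ : Measure ℂ) (C ρ : ℝ) : Prop :=
  ∀ w : ℂ, ‖w‖ = 1 → ∀ x : ℂ, ∀ r : ℝ, 0 < r →
    μ {z : ℂ | |((z - x) * (starRingEnd ℂ) w).im| < r} ≤ ENNReal.ofReal (C * r ^ ρ)

/-- Total variation distance between finite Borel measures on ℂ. -/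
def dTV (μ ν : Measure ℂ) : ℝ :=
  ⨆ s : {s : Set ℂ // MeasurableSet s}, |(μ s.1).toReal - (ν s.1).toReal|

/-- Conditional entropy H(μ, D_m | D_n) (base 2). -/
def condH (μ : Measure ℂ) (m n : ℕ) : ℝ :=
  ∑' a : ℤ × ℤ, (μ (cell2 n a)).toReal * H2 ((μ (cell2 n a))⁻¹ • μ.restrict (cell2 n a)) m

/-- The Fourier transform of a measure on ℂ ≅ ℝ². -/
def FT (μ : Measure ℂ) (ξ : ℂ) : ℂ :=
  ∫ z, Complex.exp (2 * Real.pi * Complex.I * ((z * (starRingEnd ℂ) ξ).re : ℂ)) ∂μ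

/-- μ ∈ 𝒟₂(σ): power Fourier decay with exponent σ. -/
def MemD2 (μ : Measure ℂ) (σ : ℝ) : Prop :=
  ∃ C : ℝ, ∀ ξ : ℂ, 1 ≤ ‖ξ‖ → ‖FT μ ξ‖ ≤ C * ‖ξ‖ ^ (-σ)

/-- ℙ is a Bernoulli measure on I^ℕ. -/
def IsBernoulli {I : Type} [Fintype I] [MeasurableSpace I] (P : Measure (ℕ → I)) : Prop :=
  IsProbabilityMeasure P ∧ ∃ q : I → ℝ, (∀ i, 0 ≤ q i) ∧ ∑ i, q i = 1 ∧
    ∀ (n : ℕ) (u : Fin n → I),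
      P {ω | ∀ j : Fin n, ω j.val = u j} = ∏ j : Fin n, ENNReal.ofReal (q (u j))

/-- ℙ is a fully supported Bernoulli measure on I^ℕ. -/
def IsFullBernoulli {I : Type} [Fintype I] [MeasurableSpace I] (P : Measure (ℕ → I)) : Prop :=
  IsProbabilityMeasure P ∧ ∃ q : I → ℝ, (∀ i, 0 < q i) ∧ ∑ i, q i = 1 ∧
    ∀ (n : ℕ) (u : Fin n → I),
      P {ω | ∀ j : Fin n, ω j.val = u j} = ∏ j : Fin n, ENNReal.ofReal (q (u j))

end SSmodel

namespace SSmodel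

/-- The (unnormalized) n-truncated k-component: the part of the n-th level decomposition of
η^(ω) consisting of the pieces f_u η^{(Tⁿω)} whose supporting ball B_u^(ω) = f_u(B(0,R)) is
contained in the dyadic cell D_k(x). -/
def truncSum {I : Type} [Fintype I] [MeasurableSpace I] (M : PlanarModel I)
    (η : (ℕ → I) → Measure ℂ) (R : ℝ) (ω : ℕ → I) (n k : ℕ) (x : ℂ) : Measure ℂ :=
  ∑ u : (j : Fin n) → Fin (M.k (ω j.val)),
    if ∀ z : ℂ, ‖z‖ ≤ R → M.lamProd ω n * z + M.finCode ω n u ∈ dyadicCellOf k x then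
      ENNReal.ofReal (∏ j : Fin n, M.p (ω j.val) (u j)) •
        ((η (shiftN n ω)).map (fun z => M.lamProd ω n * z + M.finCode ω n u))
    else 0

/-- The n-truncated k-component η^(ω)_{n,[x,k]} (normalized). -/
def truncComponent {I : Type} [Fintype I] [MeasurableSpace I] (M : PlanarModel I)
    (η : (ℕ → I) → Measure ℂ) (R : ℝ) (ω : ℕ → I) (n k : ℕ) (x : ℂ) : Measure ℂ :=
  (truncSum M η R ω n k x Set.univ)⁻¹ • truncSum M η R ω n k x

end SSmodel

open SSmodel SSmodel.PlanarModel

/-!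
Since `η^(ω)` is exact dimensional of dimension `α` and supported on a fixed ball, Fatou's lemma
applied to `x ↦ -log₂ η(D_m(x)) / m`, which is at least `log η(B(x, 2/2^m)) / log (2/2^m)` up to a
factor `1 - 1/m`, gives `liminf H_m(η^(ω)) ≥ α`. For a line `W`, each preimage under `π_W` of a
dyadic interval of length `2^-m` meets only `O(2^m)` level-`m` dyadic squares of that ball, so
`H(η, D_m) ≤ H(π_W η, D_m) + m + O(1)` uniformly in `W`; dividing by `m` gives the bound.
-/

namespace SSmodel

open scoped Finset ComplexConjugate

section Entropy

variable {ι κ : Type*}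

lemma plog_eq_negMulLog_div (x : ℝ) : plog x = Real.negMulLog x / Real.log 2 := by
  simp only [plog, Real.negMulLog, Real.logb]
  ring

lemma plog_nonneg {x : ℝ} (h0 : 0 ≤ x) (h1 : x ≤ 1) : 0 ≤ plog x := by
  rw [plog_eq_negMulLog_div]
  exact div_nonneg (Real.negMulLog_nonneg h0 h1) (Real.log_nonneg one_le_two)

lemma negMulLog_add_le {x y : ℝ} (hx : 0 ≤ x) (hy : 0 ≤ y) :
    Real.negMulLog (x + y) ≤ Real.negMulLog x + Real.negMulLog y := by
  have key : ∀ {a b : ℝ}, 0 ≤ a → 0 ≤ b → a * Real.log a ≤ a * Real.log (a + b) := by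
    intro a b ha hb
    rcases ha.eq_or_lt with rfl | ha
    · simp
    · exact mul_le_mul_of_nonneg_left (Real.log_le_log ha (by linarith)) ha.le
  have h1 := key hx hy
  have h2 := key hy hx
  rw [add_comm y x] at h2
  simp only [Real.negMulLog, neg_mul, add_mul]
  linarith

lemma plog_sum_le_sum_plog (s : Finset ι) {x : ι → ℝ} (hx : ∀ i ∈ s, 0 ≤ x i) :
    plog (∑ i ∈ s, x i) ≤ ∑ i ∈ s, plog (x i) :=
  Finset.le_sum_of_subadditive_on_pred plog (0 ≤ ·) (by simp [plog])
    (fun a b ha hb => by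
      simp only [plog_eq_negMulLog_div, ← add_div]
      exact div_le_div_of_nonneg_right (negMulLog_add_le ha hb) (Real.log_nonneg one_le_two))
    (fun _ _ => add_nonneg) x hx

/-- Jensen's inequality for the concave function `negMulLog`, with weights `1 / #support`. -/
lemma sum_plog_le_plog_sum_add (s : Finset ι) {x : ι → ℝ} (hx : ∀ i ∈ s, 0 ≤ x i) {N : ℝ}
    (hN : (#{i ∈ s | x i ≠ 0} : ℝ) ≤ N) :
    ∑ i ∈ s, plog (x i) ≤ plog (∑ i ∈ s, x i) + (∑ i ∈ s, x i) * Real.logb 2 N := by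
  set t := s.filter (x · ≠ 0)
  have hsum : ∑ i ∈ s, x i = ∑ i ∈ t, x i := (Finset.sum_filter_ne_zero s).symm
  have hsum_plog : ∑ i ∈ s, plog (x i) = ∑ i ∈ t, plog (x i) :=
    (Finset.sum_filter_of_ne fun i _ h => by contrapose! h; simp [h, plog]).symm
  rw [hsum, hsum_plog]
  rcases t.eq_empty_or_nonempty with ht | ht
  · simp [ht, plog]
  have hn : (0 : ℝ) < #t := by exact_mod_cast ht.card_pos
  have hxt : ∀ i ∈ t, 0 ≤ x i := fun i hi => hx i (Finset.mem_filter.mp hi).1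
  have jensen := Real.concaveOn_negMulLog.le_map_sum (t := t) (w := fun _ => (#t : ℝ)⁻¹)
    (p := x) (fun _ _ => by positivity) (by simp [Finset.sum_const, hn.ne']) hxt
  simp only [smul_eq_mul, ← Finset.mul_sum] at jensen
  set S := ∑ i ∈ t, x i
  have hS : 0 ≤ S := Finset.sum_nonneg hxt
  have hlogN : S * Real.log #t ≤ S * Real.log N :=
    mul_le_mul_of_nonneg_left (Real.log_le_log hn hN) hS
  have hlog2 : 0 < Real.log 2 := Real.log_pos one_lt_two
  have hmain : ∑ i ∈ t, Real.negMulLog (x i) ≤ Real.negMulLog S + S * Real.log N := by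
    have h := mul_le_mul_of_nonneg_left jensen hn.le
    rw [← mul_assoc, mul_inv_cancel₀ hn.ne', one_mul, Real.negMulLog_mul, Real.negMulLog,
      Real.log_inv] at h
    have hrhs : (#t : ℝ) * (S * (-(#t : ℝ)⁻¹ * -Real.log #t) + (#t : ℝ)⁻¹ * Real.negMulLog S)
        = Real.negMulLog S + S * Real.log #t := by
      field_simp
      ring
    linarith
  simp only [plog_eq_negMulLog_div, ← Finset.sum_div, Real.logb]
  rw [mul_div_assoc', ← add_div]
  exact div_le_div_of_nonneg_right hmain hlog2.le

/-- With `x a b` the mass of `α_a ∩ β_b`: `H(α) ≤ H(α ∨ β) ≤ H(β) + log₂ N` when each cell of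
`β` meets at most `N` cells of `α`. -/
lemma sum_plog_sum_le_sum_plog_sum_add (A : Finset ι) (B : Finset κ) {x : ι → κ → ℝ}
    (hx : ∀ a b, 0 ≤ x a b) (htot : ∑ b ∈ B, ∑ a ∈ A, x a b ≤ 1) {N : ℝ} (hN : 1 ≤ N)
    (hcount : ∀ b ∈ B, (#{a ∈ A | x a b ≠ 0} : ℝ) ≤ N) :
    ∑ a ∈ A, plog (∑ b ∈ B, x a b) ≤ ∑ b ∈ B, plog (∑ a ∈ A, x a b) + Real.logb 2 N := by
  have hlogN : 0 ≤ Real.logb 2 N := Real.logb_nonneg one_lt_two hN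
  calc ∑ a ∈ A, plog (∑ b ∈ B, x a b)
      ≤ ∑ a ∈ A, ∑ b ∈ B, plog (x a b) :=
        Finset.sum_le_sum fun a _ => plog_sum_le_sum_plog B fun b _ => hx a b
    _ = ∑ b ∈ B, ∑ a ∈ A, plog (x a b) := Finset.sum_comm
    _ ≤ ∑ b ∈ B, (plog (∑ a ∈ A, x a b) + (∑ a ∈ A, x a b) * Real.logb 2 N) :=
        Finset.sum_le_sum fun b hb => sum_plog_le_plog_sum_add A (fun a _ => hx a b) (hcount b hb)
    _ ≤ ∑ b ∈ B, plog (∑ a ∈ A, x a b) + 1 * Real.logb 2 N := by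
        rw [Finset.sum_add_distrib, ← Finset.sum_mul]
        gcongr
    _ = ∑ b ∈ B, plog (∑ a ∈ A, x a b) + Real.logb 2 N := by rw [one_mul]

end Entropy

section Dyadic

lemma abs_sub_floor_lt_one (y : ℝ) : |y - ⌊y⌋| < 1 := by
  rw [Int.self_sub_floor, Int.abs_fract]
  exact Int.fract_lt_one y

def intervalIdx (m : ℕ) (x : ℝ) : ℤ := ⌊(2 : ℝ) ^ m * x⌋

def window (m : ℕ) (R : ℝ) : Finset ℤ := Finset.Icc (-⌈(2 : ℝ) ^ m * R⌉) ⌈(2 : ℝ) ^ m * R⌉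

def latticePt (a : ℤ × ℤ) : ℂ := ⟨a.1, a.2⟩

lemma cellIdx_eq (m : ℕ) (z : ℂ) : cellIdx m z = (intervalIdx m z.re, intervalIdx m z.im) := rfl

lemma cell2_eq_preimage (m : ℕ) (a : ℤ × ℤ) : cell2 m a = cellIdx m ⁻¹' {a} := by
  ext z
  simp only [cell2, cellIdx, Set.mem_ofPred_eq, Set.mem_preimage, Set.mem_singleton_iff,
    Prod.ext_iff, Int.floor_eq_iff]
  tauto

lemma cell1_eq_preimage (m : ℕ) (b : ℤ) : cell1 m b = intervalIdx m ⁻¹' {b} := by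
  ext x
  simp only [cell1, intervalIdx, Set.mem_ofPred_eq, Set.mem_preimage, Set.mem_singleton_iff,
    Int.floor_eq_iff]

lemma measurable_intervalIdx (m : ℕ) : Measurable (intervalIdx m) :=
  Int.measurable_floor.comp (measurable_const.mul measurable_id)

lemma measurable_cellIdx (m : ℕ) : Measurable (cellIdx m) :=
  ((measurable_intervalIdx m).comp Complex.measurable_re).prodMk
    ((measurable_intervalIdx m).comp Complex.measurable_im)

lemma floor_mem_Icc_of_abs_le {y ρ : ℝ} (hy : |y| ≤ ρ) : ⌊y⌋ ∈ Finset.Icc (-⌈ρ⌉) ⌈ρ⌉ := by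
  rw [abs_le] at hy
  rw [Finset.mem_Icc, ← Int.floor_neg]
  exact ⟨Int.floor_mono hy.1, (Int.floor_mono hy.2).trans (Int.floor_le_ceil ρ)⟩

lemma intervalIdx_mem_window {m : ℕ} {R x : ℝ} (hx : |x| ≤ R) : intervalIdx m x ∈ window m R :=
  floor_mem_Icc_of_abs_le <| by
    rw [abs_mul, abs_of_pos (by positivity)]
    exact mul_le_mul_of_nonneg_left hx (by positivity)

lemma cellIdx_mem_window {m : ℕ} {R : ℝ} {z : ℂ} (hz : ‖z‖ ≤ R) :
    cellIdx m z ∈ window m R ×ˢ window m R :=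
  Finset.mem_product.mpr ⟨intervalIdx_mem_window ((Complex.abs_re_le_norm z).trans hz),
    intervalIdx_mem_window ((Complex.abs_im_le_norm z).trans hz)⟩

lemma norm_latticePt_cellIdx_sub_lt (m : ℕ) (z : ℂ) :
    ‖latticePt (cellIdx m z) - (2 : ℝ) ^ m • z‖ < 2 := by
  have hfract : ∀ y : ℝ, |(⌊y⌋ : ℝ) - y| < 1 := fun y => by
    rw [abs_sub_comm]
    exact abs_sub_floor_lt_one y
  calc ‖latticePt (cellIdx m z) - (2 : ℝ) ^ m • z‖
      ≤ |(latticePt (cellIdx m z) - (2 : ℝ) ^ m • z).re|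
        + |(latticePt (cellIdx m z) - (2 : ℝ) ^ m • z).im| := Complex.norm_le_abs_re_add_abs_im _
    _ < 1 + 1 := by
        simp only [latticePt, cellIdx, Complex.sub_re, Complex.sub_im, Complex.smul_re,
          Complex.smul_im, smul_eq_mul]
        exact add_lt_add (hfract _) (hfract _)
    _ = 2 := one_add_one_eq_two

lemma dyadicCellOf_subset_closedBall (m : ℕ) (x : ℂ) :
    dyadicCellOf m x ⊆ Metric.closedBall x (2 / 2 ^ m) := by
  intro z hz
  rw [dyadicCellOf, cell2_eq_preimage, Set.mem_preimage, Set.mem_singleton_iff, cellIdx_eq,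
    cellIdx_eq, Prod.ext_iff] at hz
  have hre := Int.abs_sub_lt_one_of_floor_eq_floor hz.1
  have him := Int.abs_sub_lt_one_of_floor_eq_floor hz.2
  rw [← mul_sub, abs_mul, abs_of_pos (by positivity)] at hre him
  have h2m : (0 : ℝ) < 2 ^ m := by positivity
  rw [Metric.mem_closedBall, dist_eq_norm, le_div_iff₀ h2m]
  calc ‖z - x‖ * 2 ^ m ≤ (|(z - x).re| + |(z - x).im|) * 2 ^ m := by
        gcongr
        exact Complex.norm_le_abs_re_add_abs_im _
    _ ≤ 2 := by
        rw [Complex.sub_re, Complex.sub_im]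
        nlinarith

end Dyadic

section Projection

lemma measurable_projMap (w : ℂ) : Measurable (projMap w) :=
  (Complex.measurable_re.mul measurable_const).add (Complex.measurable_im.mul measurable_const)

lemma projMap_eq_re (w z : ℂ) : projMap w z = (z * conj w).re := by
  simp only [projMap, Complex.mul_re, Complex.conj_re, Complex.conj_im]
  ring

lemma projMap_I_mul_eq_im (w z : ℂ) : projMap (Complex.I * w) z = (z * conj w).im := by
  simp only [projMap, Complex.mul_re, Complex.mul_im, Complex.conj_re, Complex.conj_im,
    Complex.I_re, Complex.I_im]
  ring

lemma projMap_sub (w z z' : ℂ) : projMap w (z - z') = projMap w z - projMap w z' := by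
  simp only [projMap, Complex.sub_re, Complex.sub_im]
  ring

lemma projMap_smul (w z : ℂ) (c : ℝ) : projMap w (c • z) = c * projMap w z := by
  simp only [projMap, Complex.smul_re, Complex.smul_im, smul_eq_mul]
  ring

lemma abs_projMap_le {w : ℂ} (hw : ‖w‖ = 1) (z : ℂ) : |projMap w z| ≤ ‖z‖ := by
  rw [projMap_eq_re]
  simpa [hw] using Complex.abs_re_le_norm (z * conj w)

/-- `projMap w` and `projMap (I * w)` are the coordinates in the orthonormal basis `(w, I * w)`. -/
lemma norm_le_abs_projMap_add {w : ℂ} (hw : ‖w‖ = 1) (z : ℂ) :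
    ‖z‖ ≤ |projMap w z| + |projMap (Complex.I * w) z| := by
  rw [projMap_eq_re, projMap_I_mul_eq_im]
  simpa [hw] using Complex.norm_le_abs_re_add_abs_im (z * conj w)

lemma card_fibre_le_of_near_line {w : ℂ} (hw : ‖w‖ = 1) (s : Finset (ℤ × ℤ)) {c : ℝ}
    (hc : ∀ a ∈ s, |projMap w (latticePt a) - c| ≤ 3) (y : ℤ) :
    #{a ∈ s | ⌊projMap (Complex.I * w) (latticePt a)⌋ = y} ≤ 225 := by
  rcases Finset.eq_empty_or_nonempty {a ∈ s | ⌊projMap (Complex.I * w) (latticePt a)⌋ = y}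
    with he | ⟨a₀, ha₀⟩
  · simp [he]
  obtain ⟨ha₀s, rfl⟩ := Finset.mem_filter.mp ha₀
  have hbox : ∀ a ∈ s, ⌊projMap (Complex.I * w) (latticePt a)⌋
      = ⌊projMap (Complex.I * w) (latticePt a₀)⌋ →
      a ∈ Finset.Icc (a₀.1 - 7) (a₀.1 + 7) ×ˢ Finset.Icc (a₀.2 - 7) (a₀.2 + 7) := by
    intro a ha hf
    have h1 : |projMap w (latticePt a - latticePt a₀)| ≤ 6 := by
      rw [projMap_sub]
      have := abs_sub_le (projMap w (latticePt a)) c (projMap w (latticePt a₀))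
      rw [abs_sub_comm c] at this
      linarith [hc a ha, hc a₀ ha₀s]
    have h2 : |projMap (Complex.I * w) (latticePt a - latticePt a₀)| ≤ 1 := by
      rw [projMap_sub]
      exact (Int.abs_sub_lt_one_of_floor_eq_floor hf).le
    have hclose : ‖latticePt a - latticePt a₀‖ ≤ 7 := by
      linarith [norm_le_abs_projMap_add hw (latticePt a - latticePt a₀)]
    have hre : |((a.1 - a₀.1 : ℤ) : ℝ)| ≤ 7 := by
      simpa [latticePt] using (Complex.abs_re_le_norm _).trans hclose
    have him : |((a.2 - a₀.2 : ℤ) : ℝ)| ≤ 7 := by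
      simpa [latticePt] using (Complex.abs_im_le_norm _).trans hclose
    rw [← Int.cast_abs, ← Int.cast_ofNat, Int.cast_le, abs_le] at hre him
    simp only [Finset.mem_product, Finset.mem_Icc]
    omega
  calc #{a ∈ s | ⌊projMap (Complex.I * w) (latticePt a)⌋
        = ⌊projMap (Complex.I * w) (latticePt a₀)⌋}
      ≤ #(Finset.Icc (a₀.1 - 7) (a₀.1 + 7) ×ˢ Finset.Icc (a₀.2 - 7) (a₀.2 + 7)) :=
        Finset.card_le_card fun a ha =>
          hbox a (Finset.mem_filter.mp ha).1 (Finset.mem_filter.mp ha).2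
    _ = 225 := by
        rw [Finset.card_product, Int.card_Icc, Int.card_Icc,
          show a₀.1 + 7 + 1 - (a₀.1 - 7) = 15 by ring, show a₀.2 + 7 + 1 - (a₀.2 - 7) = 15 by ring]
        rfl

/-- The coordinate along `I * w` takes `O(ρ)` integer parts on `s`, and each of its fibres lies
in a `15 × 15` box. -/
lemma card_le_of_near_line {w : ℂ} (hw : ‖w‖ = 1) (s : Finset (ℤ × ℤ)) {ρ c : ℝ} (hρ : 0 ≤ ρ)
    (hs : ∀ a ∈ s, ‖latticePt a‖ ≤ ρ) (hc : ∀ a ∈ s, |projMap w (latticePt a) - c| ≤ 3) :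
    (#s : ℝ) ≤ 225 * (2 * ρ + 3) := by
  have hmaps : ∀ a ∈ s, ⌊projMap (Complex.I * w) (latticePt a)⌋ ∈ Finset.Icc (-⌈ρ⌉) ⌈ρ⌉ :=
    fun a ha => floor_mem_Icc_of_abs_le ((abs_projMap_le (by simpa using hw) _).trans (hs a ha))
  have hcard := Finset.card_le_mul_card_image_of_maps_to hmaps 225
    fun y _ => card_fibre_le_of_near_line hw s hc y
  have hrange : (#(Finset.Icc (-⌈ρ⌉) ⌈ρ⌉) : ℝ) ≤ 2 * ρ + 3 := by
    have h0 : 0 ≤ ⌈ρ⌉ := Int.ceil_nonneg hρ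
    have hlt := Int.ceil_lt_add_one ρ
    rw [Int.card_Icc, show ⌈ρ⌉ + 1 - -⌈ρ⌉ = 2 * ⌈ρ⌉ + 1 by ring,
      show ((2 * ⌈ρ⌉ + 1).toNat : ℝ) = ((2 * ⌈ρ⌉ + 1 : ℤ) : ℝ) by
        rw [← Int.cast_natCast, Int.toNat_of_nonneg (by omega)]]
    push_cast
    linarith
  calc (#s : ℝ) ≤ 225 * #(Finset.Icc (-⌈ρ⌉) ⌈ρ⌉) := by exact_mod_cast hcard
    _ ≤ 225 * (2 * ρ + 3) := by gcongr

end Projection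

section Partition

variable {X ι : Type*} [MeasurableSpace X] {μ : Measure X} {f : X → ι} {K : Set X} {F : Finset ι}

lemma measure_preimage_singleton_eq_zero (hK : μ Kᶜ = 0) (hfK : ∀ x ∈ K, f x ∈ F) {i : ι}
    (hi : i ∉ F) : μ (f ⁻¹' {i}) = 0 :=
  measure_mono_null (fun x hx hxK => hi (Set.mem_singleton_iff.mp hx ▸ hfK x hxK)) hK

lemma measureReal_eq_sum_preimage_inter [MeasurableSpace ι] [MeasurableSingletonClass ι]
    [IsFiniteMeasure μ] (hf : Measurable f) (hK : μ Kᶜ = 0) (hfK : ∀ x ∈ K, f x ∈ F) (s : Set X) :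
    μ.real s = ∑ i ∈ F, μ.real (f ⁻¹' {i} ∩ s) := by
  have hconull : μ (f ⁻¹' F)ᶜ = 0 := measure_mono_null (fun x hx hxK => hx (hfK x hxK)) hK
  have hsum := sum_measureReal_preimage_singleton (μ := μ.restrict s) F
    (fun i _ => hf (measurableSet_singleton i))
  simp only [measureReal_restrict_apply (hf (measurableSet_singleton _)),
    measureReal_restrict_apply (hf F.measurableSet)] at hsum
  rw [hsum, measureReal_def, measureReal_def, Set.inter_comm, measure_inter_conull hconull]

end Partition

section EntropyDimension

lemma Hn2_nonneg (μ : Measure ℂ) [IsProbabilityMeasure μ] (m : ℕ) : 0 ≤ Hn2 μ m :=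
  div_nonneg (tsum_nonneg fun _ => plog_nonneg ENNReal.toReal_nonneg measureReal_le_one)
    m.cast_nonneg

lemma measure_cell2_eq_zero_of_notMem {μ : Measure ℂ} {R : ℝ} {m : ℕ}
    (hsupp : μ (Metric.closedBall 0 R)ᶜ = 0)
    {a : ℤ × ℤ} (ha : a ∉ window m R ×ˢ window m R) : μ (cell2 m a) = 0 := by
  rw [cell2_eq_preimage]
  exact measure_preimage_singleton_eq_zero hsupp
    (fun z hz => cellIdx_mem_window (by simpa using hz)) ha

lemma H2_eq_sum_window {μ : Measure ℂ} {R : ℝ} (hsupp : μ (Metric.closedBall 0 R)ᶜ = 0)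
    (m : ℕ) : H2 μ m = ∑ a ∈ window m R ×ˢ window m R, plog (μ.real (cell2 m a)) :=
  tsum_eq_sum fun a ha => by
    rw [measure_cell2_eq_zero_of_notMem hsupp ha, ENNReal.toReal_zero, plog, zero_mul, neg_zero]

lemma ae_measure_dyadicCellOf_ne_zero (μ : Measure ℂ) :
    ∀ᵐ x ∂μ, ∀ m : ℕ, μ (dyadicCellOf m x) ≠ 0 := by
  refine ae_all_iff.mpr fun m => ?_
  have hnull : μ (cellIdx m ⁻¹' {a | μ (cellIdx m ⁻¹' {a}) = 0}) = 0 :=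
    (measure_preimage_eq_zero_iff_of_countable (Set.to_countable _)).mpr fun _ ha => ha
  filter_upwards [measure_eq_zero_iff_ae_notMem.mp hnull] with x hx
  simpa [dyadicCellOf, cell2_eq_preimage] using hx

lemma lintegral_neg_logb_dyadicCellOf_div {μ : Measure ℂ} [IsProbabilityMeasure μ] {R : ℝ}
    (hsupp : μ (Metric.closedBall 0 R)ᶜ = 0) (m : ℕ) :
    ∫⁻ x, ENNReal.ofReal (-Real.logb 2 (μ.real (dyadicCellOf m x)) / m) ∂μ
      = ENNReal.ofReal (Hn2 μ m) := by
  set F := window m R ×ˢ window m R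
  set g : ℤ × ℤ → ℝ := fun a => -Real.logb 2 (μ.real (cell2 m a)) / m
  have hterm : ∀ a, ENNReal.ofReal (g a) * μ (cell2 m a)
      = ENNReal.ofReal (plog (μ.real (cell2 m a)) / m) := by
    intro a
    have hg : 0 ≤ g a := div_nonneg (neg_nonneg.mpr
      (Real.logb_nonpos one_lt_two measureReal_nonneg measureReal_le_one)) m.cast_nonneg
    rw [← ofReal_measureReal, ← ENNReal.ofReal_mul hg]
    congr 1
    simp only [g, plog]
    ring
  calc ∫⁻ x, ENNReal.ofReal (-Real.logb 2 (μ.real (dyadicCellOf m x)) / m) ∂μ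
      = ∫⁻ a, ENNReal.ofReal (g a) ∂(μ.map (cellIdx m)) :=
        (lintegral_map (f := fun a => ENNReal.ofReal (g a)) (measurable_of_countable _)
          (measurable_cellIdx m)).symm
    _ = ∑' a, ENNReal.ofReal (g a) * μ (cell2 m a) := by
        rw [lintegral_countable']
        congr 1 with a
        rw [Measure.map_apply (measurable_cellIdx m) (measurableSet_singleton a),
          cell2_eq_preimage]
    _ = ∑ a ∈ F, ENNReal.ofReal (plog (μ.real (cell2 m a)) / m) := by
        rw [tsum_congr hterm]
        exact tsum_eq_sum fun a ha => by
          rw [measureReal_def, measure_cell2_eq_zero_of_notMem hsupp ha]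
          simp [plog]
    _ = ENNReal.ofReal (Hn2 μ m) := by
        rw [← ENNReal.ofReal_sum_of_nonneg fun a _ =>
          div_nonneg (plog_nonneg measureReal_nonneg measureReal_le_one) m.cast_nonneg,
          ← Finset.sum_div, Hn2, H2_eq_sum_window hsupp]

/-- Along the radii `2 / 2^m`, the local dimension `log g(r) / log r` becomes
`-log₂ g(2 / 2^m) / m` up to a factor `1 - 1/m`. -/
lemma tendsto_neg_logb_div_of_tendsto {g : ℝ → ℝ} {α : ℝ}
    (hg : Tendsto (fun r => Real.log (g r) / Real.log r) (𝓝[>] 0) (𝓝 α)) :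
    Tendsto (fun m : ℕ => -Real.logb 2 (g (2 / 2 ^ m)) / m) atTop (𝓝 α) := by
  have hr : Tendsto (fun m : ℕ => (2 : ℝ) / 2 ^ m) atTop (𝓝[>] 0) :=
    tendsto_nhdsWithin_iff.mpr ⟨tendsto_const_nhds.div_atTop
      (tendsto_pow_atTop_atTop_of_one_lt one_lt_two), Eventually.of_forall fun m => by
        simp only [Set.mem_Ioi]; positivity⟩
  have hfac : Tendsto (fun m : ℕ => 1 - (m : ℝ)⁻¹) atTop (𝓝 1) := by
    simpa using tendsto_const_nhds.sub (tendsto_inv_atTop_nhds_zero_nat (𝕜 := ℝ))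
  have hlim := (hg.comp hr).mul hfac
  rw [mul_one] at hlim
  refine hlim.congr' ?_
  filter_upwards [eventually_ge_atTop 2] with m hm
  have hm' : (2 : ℝ) ≤ m := by exact_mod_cast hm
  have hlog2 : Real.log 2 ≠ 0 := (Real.log_pos one_lt_two).ne'
  have hlogr : Real.log (2 / 2 ^ m) = (1 - m) * Real.log 2 := by
    rw [Real.log_div two_ne_zero (by positivity), Real.log_pow]
    ring
  simp only [Function.comp, hlogr, Real.logb]
  have h1 : (1 : ℝ) - m ≠ 0 := by linarith
  have h2 : (m : ℝ) ≠ 0 := by linarith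
  field_simp
  ring

lemma eventually_lt_Hn2 {μ : Measure ℂ} [IsProbabilityMeasure μ] {R α β : ℝ}
    (hsupp : μ (Metric.closedBall 0 R)ᶜ = 0) (hdim : ExactDim μ α) (hβ : β < α) :
    ∀ᶠ m : ℕ in atTop, β < Hn2 μ m := by
  obtain ⟨β', hββ', hβ'α⟩ := exists_between hβ
  rcases le_or_gt β' 0 with hβ'0 | hβ'0
  · exact Eventually.of_forall fun m => (hββ'.trans_le hβ'0).trans_le (Hn2_nonneg μ m)
  set G : ℕ → ℂ → ℝ≥0∞ :=
    fun m x => ENNReal.ofReal (-Real.logb 2 (μ.real (dyadicCellOf m x)) / m)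
  have hG : ∀ m, Measurable (G m) := fun m =>
    (measurable_of_countable
      (fun a => ENNReal.ofReal (-Real.logb 2 (μ.real (cell2 m a)) / m))).comp
      (measurable_cellIdx m)
  have hpt : ∀ᵐ x ∂μ, ENNReal.ofReal β' ≤ liminf (fun m => G m x) atTop := by
    filter_upwards [hdim, ae_measure_dyadicCellOf_ne_zero μ] with x hx hpos
    refine le_liminf_of_le (by isBoundedDefault) ?_
    filter_upwards [(tendsto_neg_logb_div_of_tendsto hx).eventually (eventually_gt_nhds hβ'α)]
      with m hm
    refine ENNReal.ofReal_le_ofReal (hm.le.trans (div_le_div_of_nonneg_right ?_ m.cast_nonneg))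
    have hcell : 0 < μ.real (dyadicCellOf m x) := ENNReal.toReal_pos (hpos m) (measure_ne_top _ _)
    exact neg_le_neg (Real.logb_le_logb_of_le one_lt_two hcell
      (measureReal_mono (dyadicCellOf_subset_closedBall m x)))
  have hfatou : ENNReal.ofReal β' ≤ liminf (fun m => ENNReal.ofReal (Hn2 μ m)) atTop :=
    calc ENNReal.ofReal β' = ∫⁻ _, ENNReal.ofReal β' ∂μ := by simp
      _ ≤ ∫⁻ x, liminf (fun m => G m x) atTop ∂μ := lintegral_mono_ae hpt
      _ ≤ liminf (fun m => ∫⁻ x, G m x ∂μ) atTop := lintegral_liminf_le hG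
      _ = liminf (fun m => ENNReal.ofReal (Hn2 μ m)) atTop := by
          simp only [G, lintegral_neg_logb_dyadicCellOf_div hsupp]
  have hlt : ENNReal.ofReal β < ENNReal.ofReal β' := (ENNReal.ofReal_lt_ofReal_iff hβ'0).mpr hββ'
  filter_upwards [eventually_lt_of_lt_liminf (hlt.trans_le hfatou)] with m hm
  exact (ENNReal.ofReal_lt_ofReal_iff'.mp hm).1

end EntropyDimension

section ProjectionEntropy

lemma norm_latticePt_cellIdx_le {m : ℕ} {R : ℝ} {z : ℂ} (hz : ‖z‖ ≤ R) :
    ‖latticePt (cellIdx m z)‖ ≤ 2 ^ m * R + 2 := by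
  have hscaled : ‖(2 : ℝ) ^ m • z‖ ≤ 2 ^ m * R := by
    rw [norm_smul, Real.norm_of_nonneg (by positivity)]
    exact mul_le_mul_of_nonneg_left hz (by positivity)
  linarith [norm_le_norm_sub_add (latticePt (cellIdx m z)) ((2 : ℝ) ^ m • z),
    norm_latticePt_cellIdx_sub_lt m z]

lemma abs_projMap_latticePt_cellIdx_sub_le {w : ℂ} (hw : ‖w‖ = 1) (m : ℕ) (z : ℂ) :
    |projMap w (latticePt (cellIdx m z)) - intervalIdx m (projMap w z)| ≤ 3 := by
  have hsplit : projMap w (latticePt (cellIdx m z)) - intervalIdx m (projMap w z)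
      = projMap w (latticePt (cellIdx m z) - (2 : ℝ) ^ m • z)
        + (2 ^ m * projMap w z - ⌊2 ^ m * projMap w z⌋) := by
    rw [projMap_sub, projMap_smul, intervalIdx]
    ring
  rw [hsplit]
  linarith [abs_add_le (projMap w (latticePt (cellIdx m z) - (2 : ℝ) ^ m • z))
      ((2 : ℝ) ^ m * projMap w z - ⌊2 ^ m * projMap w z⌋),
    abs_projMap_le hw (latticePt (cellIdx m z) - (2 : ℝ) ^ m • z),
    norm_latticePt_cellIdx_sub_lt m z, abs_sub_floor_lt_one ((2 : ℝ) ^ m * projMap w z)]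

lemma card_le_of_forall_cellIdx_strip {w : ℂ} (hw : ‖w‖ = 1) {R : ℝ} (hR : 1 ≤ R) {m : ℕ}
    {b : ℤ} (s : Finset (ℤ × ℤ))
    (hs : ∀ a ∈ s, ∃ z : ℂ, ‖z‖ ≤ R ∧ cellIdx m z = a ∧ intervalIdx m (projMap w z) = b) :
    (#s : ℝ) ≤ 2025 * R * 2 ^ m := by
  have h2m : (1 : ℝ) ≤ 2 ^ m := one_le_pow₀ one_le_two
  calc (#s : ℝ) ≤ 225 * (2 * (2 ^ m * R + 2) + 3) := by
        refine card_le_of_near_line hw s (c := b) (by positivity) (fun a ha => ?_) (fun a ha => ?_)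
        all_goals obtain ⟨z, hzR, rfl, rfl⟩ := hs a ha
        · exact norm_latticePt_cellIdx_le hzR
        · exact abs_projMap_latticePt_cellIdx_sub_le hw m z
    _ ≤ 2025 * R * 2 ^ m := by nlinarith

lemma H2_le_H1_map_projMap {μ : Measure ℂ} [IsProbabilityMeasure μ] {R : ℝ} (hR : 1 ≤ R)
    (hsupp : μ (Metric.closedBall 0 R)ᶜ = 0) {w : ℂ} (hw : ‖w‖ = 1) (m : ℕ) :
    H2 μ m ≤ H1 (μ.map (projMap w)) m + Real.logb 2 (2025 * R * 2 ^ m) := by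
  set B := window m R
  set A := B ×ˢ B
  set p : ℂ → ℤ := fun z => intervalIdx m (projMap w z)
  have hp : Measurable p := (measurable_intervalIdx m).comp (measurable_projMap w)
  have hpK : ∀ z ∈ Metric.closedBall (0 : ℂ) R, p z ∈ B := fun z hz =>
    intervalIdx_mem_window ((abs_projMap_le hw z).trans (mem_closedBall_zero_iff.mp hz))
  have hcK : ∀ z ∈ Metric.closedBall (0 : ℂ) R, cellIdx m z ∈ A := fun z hz =>
    cellIdx_mem_window (mem_closedBall_zero_iff.mp hz)
  set x : ℤ × ℤ → ℤ → ℝ := fun a b => μ.real (cellIdx m ⁻¹' {a} ∩ p ⁻¹' {b})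
  have hcell : ∀ a, μ.real (cell2 m a) = ∑ b ∈ B, x a b := fun a => by
    rw [cell2_eq_preimage, measureReal_eq_sum_preimage_inter hp hsupp hpK]
    simp only [x, Set.inter_comm]
  have hstrip : ∀ b, μ.real (p ⁻¹' {b}) = ∑ a ∈ A, x a b :=
    fun b => measureReal_eq_sum_preimage_inter (measurable_cellIdx m) hsupp hcK _
  have hH2 : H2 μ m = ∑ a ∈ A, plog (∑ b ∈ B, x a b) :=
    (H2_eq_sum_window hsupp m).trans (Finset.sum_congr rfl fun a _ => congrArg plog (hcell a))
  have hH1 : H1 (μ.map (projMap w)) m = ∑ b ∈ B, plog (∑ a ∈ A, x a b) := by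
    have hmap : ∀ b, (μ.map (projMap w)) (cell1 m b) = μ (p ⁻¹' {b}) := fun b => by
      rw [cell1_eq_preimage, Measure.map_apply (measurable_projMap w)
        (measurable_intervalIdx m (measurableSet_singleton b))]
      rfl
    rw [H1, tsum_eq_sum fun b hb => by
      rw [hmap, measure_preimage_singleton_eq_zero hsupp hpK hb, ENNReal.toReal_zero, plog,
        zero_mul, neg_zero]]
    exact Finset.sum_congr rfl fun b _ => by rw [hmap, ← measureReal_def, hstrip]
  have htot : ∑ b ∈ B, ∑ a ∈ A, x a b ≤ 1 := by
    have h := measureReal_eq_sum_preimage_inter hp hsupp hpK Set.univ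
    simp only [Set.inter_univ, probReal_univ, hstrip] at h
    exact h.ge
  have hcount : ∀ b ∈ B, (#{a ∈ A | x a b ≠ 0} : ℝ) ≤ 2025 * R * 2 ^ m := by
    intro b _
    refine card_le_of_forall_cellIdx_strip hw hR (b := b) _ fun a ha => ?_
    have hne : μ (cellIdx m ⁻¹' {a} ∩ p ⁻¹' {b} ∩ Metric.closedBall 0 R) ≠ 0 := by
      rw [measure_inter_conull hsupp]
      exact fun h => (Finset.mem_filter.mp ha).2 (by simp [x, measureReal_def, h])
    obtain ⟨z, ⟨hza, hzb⟩, hzR⟩ := nonempty_of_measure_ne_zero hne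
    exact ⟨z, mem_closedBall_zero_iff.mp hzR, hza, hzb⟩
  rw [hH2, hH1]
  exact sum_plog_sum_le_sum_plog_sum_add A B (fun _ _ => measureReal_nonneg) htot
    (by nlinarith [one_le_pow₀ (M₀ := ℝ) (n := m) one_le_two]) hcount

end ProjectionEntropy

namespace PlanarModel

variable {I : Type} [Fintype I] [MeasurableSpace I] (M : PlanarModel I)

lemma exists_summable_norm_codingTerm_le : ∃ c : ℕ → ℝ, Summable c ∧
    ∀ (ω : ℕ → I) (n : ℕ) (u : (n : ℕ) → Fin (M.k (ω n))),
      ‖(∏ j ∈ Finset.range n, M.lam (ω j)) * M.tr (ω n) (u n)‖ ≤ c n := by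
  set r : NNReal := Finset.univ.sup fun i => ‖M.lam i‖₊
  have hr : r < 1 := (Finset.sup_lt_iff zero_lt_one).mpr fun i _ => M.lam_lt i
  set T : ℝ := ∑ i, ∑ j, ‖M.tr i j‖
  have hT : ∀ i j, ‖M.tr i j‖ ≤ T := fun i j =>
    (Finset.single_le_sum (f := fun j => ‖M.tr i j‖) (fun _ _ => norm_nonneg _)
      (Finset.mem_univ j)).trans
      (Finset.single_le_sum (f := fun i => ∑ j, ‖M.tr i j‖)
        (fun _ _ => Finset.sum_nonneg fun _ _ => norm_nonneg _) (Finset.mem_univ i))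
  refine ⟨fun n => (r : ℝ) ^ n * T,
    (summable_geometric_of_lt_one r.coe_nonneg (by exact_mod_cast hr)).mul_right T,
    fun ω n u => ?_⟩
  have hprod : ∏ j ∈ Finset.range n, ‖M.lam (ω j)‖ ≤ (r : ℝ) ^ n :=
    calc ∏ j ∈ Finset.range n, ‖M.lam (ω j)‖ ≤ ∏ _j ∈ Finset.range n, (r : ℝ) :=
          Finset.prod_le_prod (fun _ _ => norm_nonneg _) fun j _ =>
            NNReal.coe_le_coe.mpr (Finset.le_sup (f := fun i => ‖M.lam i‖₊) (Finset.mem_univ _))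
      _ = (r : ℝ) ^ n := by rw [Finset.prod_const, Finset.card_range]
  rw [norm_mul, norm_prod]
  exact mul_le_mul hprod (hT _ _) (norm_nonneg _) (pow_nonneg r.coe_nonneg n)

lemma continuous_codingMap (ω : ℕ → I) : Continuous (M.codingMap ω) := by
  obtain ⟨c, hc, hbound⟩ := M.exists_summable_norm_codingTerm_le
  exact continuous_tsum (fun n => continuous_const.mul (continuous_of_discreteTopology.comp
    (continuous_apply n))) hc (hbound ω)

lemma measurable_codingMap (ω : ℕ → I) : Measurable (M.codingMap ω) :=
  (M.continuous_codingMap ω).measurable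

lemma exists_norm_codingMap_le : ∃ R : ℝ, 1 ≤ R ∧ ∀ ω u, ‖M.codingMap ω u‖ ≤ R := by
  obtain ⟨c, hc, hbound⟩ := M.exists_summable_norm_codingTerm_le
  exact ⟨max 1 (∑' n, c n), le_max_left _ _, fun ω u =>
    (tsum_of_norm_bounded hc.hasSum fun n => hbound ω n u).trans (le_max_right _ _)⟩

variable {M} {η : (ℕ → I) → Measure ℂ}

lemma IsCodingFamily.isProbabilityMeasure (hη : M.IsCodingFamily η) (ω : ℕ → I) :
    IsProbabilityMeasure (η ω) := by
  obtain ⟨μ, ⟨hμ, -⟩, hημ⟩ := hη ω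
  rw [hημ]
  exact Measure.isProbabilityMeasure_map (M.measurable_codingMap ω).aemeasurable

lemma IsCodingFamily.measure_compl_closedBall (hη : M.IsCodingFamily η) {R : ℝ}
    (hR : ∀ ω u, ‖M.codingMap ω u‖ ≤ R) (ω : ℕ → I) : η ω (Metric.closedBall 0 R)ᶜ = 0 := by
  obtain ⟨μ, -, hημ⟩ := hη ω
  rw [hημ, Measure.map_apply (M.measurable_codingMap ω)
    Metric.isClosed_closedBall.measurableSet.compl]
  convert measure_empty (μ := μ)
  exact Set.eq_empty_of_forall_notMem fun u hu => hu (mem_closedBall_zero_iff.mpr (hR ω u))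

end PlanarModel

lemma eventually_le_projHn {μ : Measure ℂ} [IsProbabilityMeasure μ] {R α ε : ℝ} (hR : 1 ≤ R)
    (hsupp : μ (Metric.closedBall 0 R)ᶜ = 0) (hdim : ExactDim μ α) (hε : 0 < ε) :
    ∀ᶠ m : ℕ in atTop, ∀ w : ℂ, ‖w‖ = 1 → α - 1 - ε ≤ projHn w μ m := by
  filter_upwards [eventually_lt_Hn2 hsupp hdim (sub_lt_self α (half_pos hε)),
    (tendsto_const_div_atTop_nhds_zero_nat (Real.logb 2 (2025 * R))).eventually
      (gt_mem_nhds (half_pos hε)), eventually_gt_atTop 0] with m hHn2 hconst hm w hw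
  have hproj := H2_le_H1_map_projMap hR hsupp hw m
  rw [Real.logb_mul (by positivity) (by positivity), Real.logb_pow,
    Real.logb_self_eq_one one_lt_two, mul_one] at hproj
  have hm' : (0 : ℝ) < m := by exact_mod_cast hm
  rw [Hn2, lt_div_iff₀ hm'] at hHn2
  rw [div_lt_iff₀ hm'] at hconst
  rw [projHn, Hn1, le_div_iff₀ hm']
  linarith

end SSmodel

theorem stmt_7_general {I : Type} [Fintype I] [MeasurableSpace I] (M : PlanarModel I)
    (η : (ℕ → I) → Measure ℂ) (hη : M.IsCodingFamily η)
    (α : ℝ) (hdim : ∀ᵐ ω ∂M.P, ExactDim (η ω) α) :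
    ∀ᵐ ω ∂M.P, ∀ ε : ℝ, 0 < ε → ∃ m₀ : ℕ, ∀ m : ℕ, m₀ < m →
      α - 1 - ε ≤ ⨅ w : UnitVec, projHn w.1 (η ω) m := by
  obtain ⟨R, hR, hbound⟩ := M.exists_norm_codingMap_le
  filter_upwards [hdim] with ω hω ε hε
  have := hη.isProbabilityMeasure ω
  obtain ⟨m₀, hm₀⟩ := eventually_atTop.mp
    (eventually_le_projHn hR (hη.measure_compl_closedBall hbound ω) hω hε)
  have : Nonempty UnitVec := ⟨⟨1, norm_one⟩⟩
  exact ⟨m₀, fun m hm => le_ciInf fun w => hm₀ m hm.le w.1 w.2⟩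

/-- If α ≥ 1 then ℙ-a.s. all projections of η^(ω) onto lines have normalized
entropy at least α − 1 − ε at all sufficiently fine scales. -/
theorem stmt_7 {I : Type} [Fintype I] [MeasurableSpace I] (M : PlanarModel I)
    (hStar : M.AssumptionStar)
    (η : (ℕ → I) → Measure ℂ) (hη : M.IsCodingFamily η)
    (α : ℝ) (hdim : ∀ᵐ ω ∂M.P, ExactDim (η ω) α) (h1 : 1 ≤ α) :
    ∀ᵐ ω ∂M.P, ∀ ε : ℝ, 0 < ε → ∃ m₀ : ℕ, ∀ m : ℕ, m₀ < m →
      α - 1 - ε ≤ ⨅ w : UnitVec, projHn w.1 (η ω) m :=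
  stmt_7_general M η hη α hdim
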